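/- arXiv:1506.03470 — 2 statements merged into one kernel-verified Lean document; each statement's English description precedes it below -/
import Mathlib

section
/- Let n ≥ 1 and x = (x_1,…,x_n) ∈ ℕ^n. Then, as an identity of polynomials in q, ∑_{α ∈ PF(x)} q^{rsum(α)} = ∑_{(γ_1,…,γ_n) ∈ Γ(n)} (n!/(γ_1!⋯γ_n!)) · q^{∑_{i=1}^{n−1} (γ_1+γ_2+⋯+γ_i − i) x_{i+1}} · ∏_{i=1}^{n} [x_i]_q^{γ_i}. -/
/-!
Cut `[0, x_1 + ⋯ + x_n)` into consecutive blocks of sizes `x_1, …, x_n`. Writing the `j`-th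
entry of `α` as the `r_j`-th value, counted from the top, of the block `b_j` containing it
identifies `x`-parking functions with pairs `(b, r)`, where `r_j < x_{b_j}` and the fibre sizes
`γ_i = #b⁻¹(i)` lie in `Γ(n)`. Under this correspondence `rsum(α)` is the exponent attached to
`γ` plus `∑ r_j`, so summing over `r` produces `∏ [x_i]_q^{γ_i}`, and the number of `b` with
fibre sizes `γ` is the multinomial coefficient `n! / ∏ γ_i!`.
-/

open Polynomial

/-- `α` is an `x`-parking function of length `n` (`x` given 0-based: `x k` is `x_{k+1}`). -/
def IsVPF (n : ℕ) (x : ℕ → ℕ) (α : Fin n → ℕ) : Prop :=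
  ∀ j : Fin n, (j : ℕ) + 1 ≤
    (Finset.univ.filter fun i => α i < ∑ k ∈ Finset.range ((j : ℕ) + 1), x k).card

/-- The reversed sum `rsum(α) = (∑_{i=1}^n (n+1−i)x_i) − n − sum(α)`. -/
def rsumV (n : ℕ) (x : ℕ → ℕ) (α : Fin n → ℕ) : ℕ :=
  (∑ i ∈ Finset.range n, (n - i) * x i) - n - ∑ i, α i

/-- `Γ(n)`: sequences `(γ_1,…,γ_n) ∈ ℕ^n` with `γ_1+⋯+γ_j ≥ j` for all `j` and total sum `n`
(the condition for `j = n` follows from the total-sum condition, so this agrees with the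
definition requiring the inequality only for `1 ≤ j ≤ n−1`). -/
def GammaSet (n : ℕ) : Set (Fin n → ℕ) :=
  {γ | (∀ j : Fin n, (j : ℕ) + 1 ≤ ∑ k ∈ Finset.Iic j, γ k) ∧ (∑ k, γ k) = n}

/-- The `q`-number `[k]_q = 1 + q + ⋯ + q^{k−1} ∈ ℤ[q]`. -/
noncomputable def qNum (k : ℕ) : Polynomial ℤ := ∑ i ∈ Finset.range k, X ^ i

/-- The exponent `∑_{i=1}^{n−1} (γ_1+⋯+γ_i − i)·x_{i+1}` (here `t = i − 1` is 0-based). -/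
def gammaExp (n : ℕ) (x : ℕ → ℕ) (γ : Fin n → ℕ) : ℕ :=
  ∑ t ∈ Finset.range (n - 1),
    ((∑ k ∈ Finset.univ.filter (fun k : Fin n => (k : ℕ) ≤ t), γ k) - (t + 1)) * x (t + 1)

open Finset
open scoped Nat

section FiberCard

variable {α ι : Type*} [Fintype α] [DecidableEq ι]

def fiberCard (b : α → ι) (i : ι) : ℕ := #{a | b a = i}

theorem sum_fiberCard (b : α → ι) (t : Finset ι) : ∑ i ∈ t, fiberCard b i = #{a | b a ∈ t} := by
  rw [card_eq_sum_card_fiberwise (s := {a | b a ∈ t}) (f := b) fun a ha => (mem_filter.1 ha).2]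
  refine sum_congr rfl fun i hi => congr_arg card (ext fun a => ?_)
  simp only [mem_filter, mem_univ, true_and]
  exact ⟨fun h => ⟨h ▸ hi, h⟩, And.right⟩

theorem sum_univ_fiberCard [Fintype ι] (b : α → ι) : ∑ i, fiberCard b i = Fintype.card α := by
  simp [sum_fiberCard]

theorem prod_comp_eq_prod_pow_fiberCard {M : Type*} [CommMonoid M] [Fintype ι] (b : α → ι)
    (g : ι → M) : ∏ a, g (b a) = ∏ i, g i ^ fiberCard b i := by
  simp_rw [← prod_fiberwise' univ b g, prod_const, fiberCard]

theorem exists_fiberCard_eq [Fintype ι] {γ : ι → ℕ} (hγ : ∑ i, γ i = Fintype.card α) :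
    ∃ b : α → ι, fiberCard b = γ := by
  classical
  let e : (Σ i, Fin (γ i)) ≃ α := Fintype.equivOfCardEq (by simp [hγ])
  refine ⟨fun a => (e.symm a).1, funext fun i => ?_⟩
  rw [fiberCard, ← Fintype.card_subtype, ← Fintype.card_fin (γ i)]
  exact Fintype.card_congr ((e.symm.subtypeEquiv fun a => Iff.rfl).trans
    (Equiv.sigmaSubtype i))

theorem exists_perm_comp_eq_of_fiberCard_eq {b b' : α → ι} (h : fiberCard b = fiberCard b') :
    ∃ σ : Equiv.Perm α, b' ∘ σ = b := by
  classical
  have hfib (i : ι) : {a // b a = i} ≃ {a // b' a = i} :=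
    Fintype.equivOfCardEq (by simp only [Fintype.card_subtype]; exact congr_fun h i)
  exact ⟨Equiv.ofFiberEquiv hfib, funext (Equiv.ofFiberEquiv_map hfib)⟩

theorem card_filter_fiberCard_eq_multinomial [DecidableEq α] [Fintype ι] {γ : ι → ℕ}
    (hγ : ∑ i, γ i = Fintype.card α) :
    #{b : α → ι | fiberCard b = γ} = Nat.multinomial univ γ := by
  obtain ⟨b₀, hb₀⟩ := exists_fiberCard_eq hγ
  have hstab : #{σ : Equiv.Perm α | b₀ ∘ σ = b₀} = ∏ i, (γ i)! := by
    rw [← Fintype.card_subtype, DomMulAct.stabilizer_card, ← hb₀]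
    simp only [fiberCard, Fintype.card_subtype]
  -- each fibre of `σ ↦ b₀ ∘ σ` is a coset of the stabilizer of `b₀`
  have hfibre : ∀ b ∈ ({b : α → ι | fiberCard b = γ} : Finset _),
      #{σ : Equiv.Perm α | b₀ ∘ σ = b} = ∏ i, (γ i)! := by
    intro b hb
    obtain ⟨τ, rfl⟩ := exists_perm_comp_eq_of_fiberCard_eq ((mem_filter.1 hb).2.trans hb₀.symm)
    rw [← hstab]
    refine card_equiv (Equiv.mulRight τ⁻¹) fun σ => ?_
    simp only [mem_filter, mem_univ, true_and, Equiv.coe_mulRight, Equiv.Perm.coe_mul,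
      Equiv.Perm.inv_def, ← Function.comp_assoc, Equiv.comp_symm_eq]
  have hcount := card_eq_sum_card_fiberwise (s := univ) (t := {b : α → ι | fiberCard b = γ})
    (f := fun σ : Equiv.Perm α => b₀ ∘ σ) fun σ _ => by
      simp only [coe_filter, mem_univ, true_and, Set.mem_ofPred_eq, ← hb₀]
      exact funext fun i => card_equiv σ (by simp)
  rw [Finset.card_univ, Fintype.card_perm, sum_congr rfl hfibre, sum_const, smul_eq_mul, ← hγ]
    at hcount
  refine Nat.eq_of_mul_eq_mul_right (m := ∏ i, (γ i)!) (prod_pos fun i _ => (γ i).factorial_pos) ?_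
  rw [← hcount, mul_comm, Nat.multinomial_spec]

theorem sum_filter_fiberCard_mem {M : Type*} [AddCommMonoid M] [DecidableEq α] [Fintype ι]
    (S : Finset (ι → ℕ))
    (hS : ∀ γ ∈ S, ∑ i, γ i = Fintype.card α) (F : (ι → ℕ) → M) :
    ∑ b : α → ι with fiberCard b ∈ S, F (fiberCard b) =
      ∑ γ ∈ S, Nat.multinomial univ γ • F γ := by
  rw [← sum_fiberwise_of_maps_to (g := fiberCard) (t := S) fun b hb => (mem_filter.1 hb).2]
  refine sum_congr rfl fun γ hγ => ?_
  rw [filter_filter, sum_congr rfl fun b hb => by rw [(mem_filter.1 hb).2.2], sum_const,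
    ← card_filter_fiberCard_eq_multinomial (hS γ hγ)]
  congr 2
  exact filter_congr fun b _ => ⟨And.right, fun h => ⟨h ▸ hγ, h⟩⟩

end FiberCard

theorem sum_piFinset_range_X_pow_sum {ι : Type*} [Fintype ι] [DecidableEq ι] (y : ι → ℕ) :
    ∑ r ∈ Fintype.piFinset fun i => range (y i), (X : ℤ[X]) ^ ∑ i, r i = ∏ i, qNum (y i) := by
  simp_rw [← prod_pow_eq_pow_sum, qNum]
  rw [prod_univ_sum]

section PartialSum

variable (x : ℕ → ℕ)

def partialSum (m : ℕ) : ℕ := ∑ k ∈ range m, x k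

theorem partialSum_mono : Monotone (partialSum x) :=
  fun _ _ h => sum_le_sum_of_subset (range_subset_range.2 h)

theorem partialSum_succ (m : ℕ) : partialSum x (m + 1) = partialSum x m + x m :=
  sum_range_succ x m

theorem exists_mem_block {v m : ℕ} (hv : v < partialSum x m) :
    ∃ i < m, partialSum x i ≤ v ∧ v < partialSum x (i + 1) := by
  induction m with
  | zero => simp [partialSum] at hv
  | succ m ih =>
    by_cases h : v < partialSum x m
    · obtain ⟨i, hi, hmem⟩ := ih h
      exact ⟨i, hi.trans (lt_add_one m), hmem⟩
    · exact ⟨m, lt_add_one m, not_lt.1 h, hv⟩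

theorem lt_partialSum_succ_iff {v i t : ℕ} (h₁ : partialSum x i ≤ v)
    (h₂ : v < partialSum x (i + 1)) : v < partialSum x (t + 1) ↔ i ≤ t := by
  constructor
  · intro h
    by_contra! ht
    have := partialSum_mono x (show t + 1 ≤ i by omega)
    omega
  · intro ht
    have := partialSum_mono x (show i + 1 ≤ t + 1 by omega)
    omega

theorem eq_of_mem_block {v i i' : ℕ} (h₁ : partialSum x i ≤ v) (h₂ : v < partialSum x (i + 1))
    (h₁' : partialSum x i' ≤ v) (h₂' : v < partialSum x (i' + 1)) : i = i' :=
  le_antisymm ((lt_partialSum_succ_iff x h₁ h₂).1 h₂') ((lt_partialSum_succ_iff x h₁' h₂').1 h₂)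

end PartialSum

section OfBlocks

variable {n : ℕ} {x : ℕ → ℕ} {b : Fin n → Fin n} {r : Fin n → ℕ}

variable (x) in
def ofBlocks (b : Fin n → Fin n) (r : Fin n → ℕ) (j : Fin n) : ℕ :=
  partialSum x (b j + 1) - 1 - r j

theorem ofBlocks_mem_block (hr : ∀ j, r j < x (b j)) (j : Fin n) :
    partialSum x (b j) ≤ ofBlocks x b r j ∧ ofBlocks x b r j < partialSum x (b j + 1) := by
  have := partialSum_succ x (b j)
  have := hr j
  unfold ofBlocks
  omega

theorem card_ofBlocks_lt (hr : ∀ j, r j < x (b j)) (t : Fin n) :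
    #{j | ofBlocks x b r j < ∑ k ∈ range (t + 1), x k} = ∑ k ∈ Iic t, fiberCard b k := by
  rw [sum_fiberCard]
  refine congr_arg card (filter_congr fun j _ => ?_)
  rw [mem_Iic, Fin.le_def]
  exact lt_partialSum_succ_iff x (ofBlocks_mem_block hr j).1 (ofBlocks_mem_block hr j).2

theorem isVPF_ofBlocks_iff (hr : ∀ j, r j < x (b j)) :
    IsVPF n x (ofBlocks x b r) ↔ fiberCard b ∈ GammaSet n := by
  simp only [IsVPF, GammaSet, Set.mem_ofPred_eq, card_ofBlocks_lt hr, sum_univ_fiberCard,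
    Fintype.card_fin, and_true]

theorem sum_partialSum_succ (b : Fin n → Fin n) :
    ∑ j, partialSum x (b j + 1) = ∑ k ∈ range n, #{j | k ≤ (b j : ℕ)} * x k := by
  simp only [partialSum]
  rw [sum_comm' (t' := range n) (s' := fun k => {j | k ≤ (b j : ℕ)})]
  · simp only [sum_const, smul_eq_mul]
  · intro j k
    have := (b j).isLt
    simp only [mem_univ, true_and, mem_range, mem_filter]
    omega

theorem gammaExp_fiberCard (b : Fin n → Fin n) :
    gammaExp n x (fiberCard b) = ∑ k ∈ range n, (#{j | (b j : ℕ) < k} - k) * x k := by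
  rcases n with _ | n
  · simp [gammaExp]
  rw [sum_range_succ']
  simp only [gammaExp, sum_fiberCard, add_tsub_cancel_right, mem_filter, mem_univ, true_and,
    Nat.lt_succ_iff, Nat.not_lt_zero, filter_false, Finset.card_empty, tsub_zero, zero_mul,
    add_zero]

theorem le_card_lt_of_fiberCard_mem_gammaSet (hb : fiberCard b ∈ GammaSet n) {k : ℕ}
    (hk : k ≤ n) : k ≤ #{j | (b j : ℕ) < k} := by
  rcases k with _ | k
  · exact Nat.zero_le _
  have := hb.1 ⟨k, hk⟩
  rwa [sum_fiberCard,
    filter_congr fun j _ => by rw [mem_Iic, Fin.le_def, ← Nat.lt_succ_iff]] at this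

theorem sum_sub_mul_eq_gammaExp_add_sum_partialSum (hb : fiberCard b ∈ GammaSet n) :
    ∑ i ∈ range n, (n - i) * x i = gammaExp n x (fiberCard b) + ∑ j, partialSum x (b j + 1) := by
  rw [gammaExp_fiberCard, sum_partialSum_succ, ← sum_add_distrib]
  refine sum_congr rfl fun k hk => ?_
  have hle := le_card_lt_of_fiberCard_mem_gammaSet hb (mem_range.1 hk).le
  have hsplit := card_filter_add_card_filter_not (s := univ) fun j : Fin n => (b j : ℕ) < k
  simp only [not_lt, Finset.card_univ, Fintype.card_fin] at hsplit
  rw [← add_mul]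
  congr 1
  omega

theorem rsumV_ofBlocks (hb : fiberCard b ∈ GammaSet n) (hr : ∀ j, r j < x (b j)) :
    rsumV n x (ofBlocks x b r) = gammaExp n x (fiberCard b) + ∑ j, r j := by
  have hblocks : ∑ j, ofBlocks x b r j + ∑ j, r j + n = ∑ j, partialSum x (b j + 1) := by
    calc ∑ j, ofBlocks x b r j + ∑ j, r j + n = ∑ j, (ofBlocks x b r j + r j + 1) := by
          simp only [sum_add_distrib, sum_const, Finset.card_univ, Fintype.card_fin, smul_eq_mul,
            mul_one]
      _ = ∑ j, partialSum x (b j + 1) := sum_congr rfl fun j _ => ?_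
    have := ofBlocks_mem_block hr j
    have := partialSum_succ x (b j)
    have := hr j
    unfold ofBlocks at *
    omega
  have := sum_sub_mul_eq_gammaExp_add_sum_partialSum (x := x) hb
  unfold rsumV
  omega

end OfBlocks

section ParkingFunctions

variable {n : ℕ} {x : ℕ → ℕ}

theorem lt_partialSum_of_isVPF {α : Fin n → ℕ} (hα : IsVPF n x α) (j : Fin n) :
    α j < partialSum x n := by
  have h := hα ⟨n - 1, Nat.sub_lt j.pos one_pos⟩
  rw [Fin.val_mk, Nat.sub_one_add_one j.pos.ne'] at h
  have hcard : #{i | α i < partialSum x n} = #(univ : Finset (Fin n)) :=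
    le_antisymm (card_filter_le _ _) (by rwa [Finset.card_univ, Fintype.card_fin])
  exact card_filter_eq_iff.1 hcard j (mem_univ j)

theorem exists_ofBlocks_eq_of_isVPF {α : Fin n → ℕ} (hα : IsVPF n x α) :
    ∃ b r, (∀ j, r j < x (b j)) ∧ ofBlocks x b r = α := by
  choose i hi hmem using fun j => exists_mem_block x (lt_partialSum_of_isVPF hα j)
  refine ⟨fun j => ⟨i j, hi j⟩, fun j => partialSum x (i j + 1) - 1 - α j, fun j => ?_,
    funext fun j => ?_⟩ <;>
  · have := partialSum_succ x (i j)
    have := hmem j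
    simp only [ofBlocks]
    omega

theorem ofBlocks_inj {b b' : Fin n → Fin n} {r r' : Fin n → ℕ} (hr : ∀ j, r j < x (b j))
    (hr' : ∀ j, r' j < x (b' j)) (h : ofBlocks x b r = ofBlocks x b' r') : b = b' ∧ r = r' := by
  have hb : b = b' := funext fun j => Fin.ext <|
    eq_of_mem_block x (ofBlocks_mem_block hr j).1 (ofBlocks_mem_block hr j).2
      (h ▸ (ofBlocks_mem_block hr' j).1) (h ▸ (ofBlocks_mem_block hr' j).2)
  subst hb
  refine ⟨rfl, funext fun j => ?_⟩
  have := congr_fun h j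
  have := hr j
  have := hr' j
  have := partialSum_succ x (b j)
  simp only [ofBlocks] at *
  omega

open Classical in
noncomputable def blockData (n : ℕ) (x : ℕ → ℕ) : Finset (Σ _ : Fin n → Fin n, Fin n → ℕ) :=
  ({b | fiberCard b ∈ GammaSet n} : Finset (Fin n → Fin n)).sigma
    fun b => Fintype.piFinset fun j => range (x (b j))

theorem mem_blockData {p : Σ _ : Fin n → Fin n, Fin n → ℕ} :
    p ∈ blockData n x ↔ fiberCard p.1 ∈ GammaSet n ∧ ∀ j, p.2 j < x (p.1 j) := by
  simp [blockData]

theorem setOf_isVPF_eq_image_ofBlocks :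
    {α | IsVPF n x α} = (blockData n x).image fun p => ofBlocks x p.1 p.2 := by
  ext α
  simp only [Set.mem_ofPred_eq, coe_image, Set.mem_image, mem_coe, mem_blockData]
  constructor
  · intro hα
    obtain ⟨b, r, hr, rfl⟩ := exists_ofBlocks_eq_of_isVPF hα
    exact ⟨⟨b, r⟩, ⟨(isVPF_ofBlocks_iff hr).1 hα, hr⟩, rfl⟩
  · rintro ⟨p, ⟨hb, hr⟩, rfl⟩
    exact (isVPF_ofBlocks_iff hr).2 hb

theorem injOn_ofBlocks :
    Set.InjOn (fun p : Σ _ : Fin n → Fin n, Fin n → ℕ => ofBlocks x p.1 p.2) (blockData n x) := by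
  rintro ⟨b, r⟩ hp ⟨b', r'⟩ hp' h
  obtain ⟨rfl, rfl⟩ := ofBlocks_inj (mem_blockData.1 hp).2 (mem_blockData.1 hp').2 h
  rfl

end ParkingFunctions

open Classical in
theorem finsum_isVPF_X_pow_rsumV (n : ℕ) (x : ℕ → ℕ) :
    ∑ᶠ α ∈ {α : Fin n → ℕ | IsVPF n x α}, (X : ℤ[X]) ^ rsumV n x α =
      ∑ b : Fin n → Fin n with fiberCard b ∈ GammaSet n,
        X ^ gammaExp n x (fiberCard b) * ∏ i : Fin n, qNum (x i) ^ fiberCard b i := by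
  rw [setOf_isVPF_eq_image_ofBlocks, finsum_mem_coe_finset, sum_image injOn_ofBlocks,
    blockData, sum_sigma]
  refine sum_congr rfl fun b hb => ?_
  calc ∑ r ∈ Fintype.piFinset (fun j => range (x (b j))), (X : ℤ[X]) ^ rsumV n x (ofBlocks x b r)
      = ∑ r ∈ Fintype.piFinset (fun j => range (x (b j))),
          X ^ gammaExp n x (fiberCard b) * X ^ ∑ j, r j := by
        refine sum_congr rfl fun r hr => ?_
        have hr' (j : Fin n) : r j < x (b j) := mem_range.1 (Fintype.mem_piFinset.1 hr j)
        rw [rsumV_ofBlocks (mem_filter.1 hb).2 hr', pow_add]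
    _ = X ^ gammaExp n x (fiberCard b) * ∏ i : Fin n, qNum (x i) ^ fiberCard b i := by
        rw [← mul_sum, sum_piFinset_range_X_pow_sum,
          prod_comp_eq_prod_pow_fiberCard b fun i : Fin n => qNum (x i)]

theorem finite_gammaSet (n : ℕ) : (GammaSet n).Finite :=
  (Set.Finite.pi' fun _ => Set.finite_Iic n).subset fun _ hγ i =>
    hγ.2 ▸ single_le_sum (fun _ _ => Nat.zero_le _) (mem_univ i)

theorem stmt2_general (n : ℕ) (x : ℕ → ℕ) :
    ∑ᶠ α ∈ {α : Fin n → ℕ | IsVPF n x α}, (X : Polynomial ℤ) ^ rsumV n x α =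
      ∑ᶠ γ ∈ GammaSet n,
        ((Nat.factorial n / ∏ i : Fin n, Nat.factorial (γ i) : ℕ) : Polynomial ℤ) *
          X ^ gammaExp n x γ * ∏ i : Fin n, qNum (x (i : ℕ)) ^ γ i := by
  classical
  have hΓ := finite_gammaSet n
  rw [finsum_isVPF_X_pow_rsumV, finsum_mem_eq_finite_toFinset_sum _ hΓ,
    filter_congr fun b _ => (hΓ.mem_toFinset (a := fiberCard b)).symm,
    sum_filter_fiberCard_mem _ (fun γ hγ => by simpa using (hΓ.mem_toFinset.1 hγ).2)
      fun γ => X ^ gammaExp n x γ * ∏ i : Fin n, qNum (x i) ^ γ i]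
  refine sum_congr rfl fun γ hγ => ?_
  rw [Nat.multinomial, (hΓ.mem_toFinset.1 hγ).2, nsmul_eq_mul, mul_assoc]

/-- Pitman–Stanley and Kung–Yan: the reversed sum enumerator for `x`-parking functions equals
`∑_{γ ∈ Γ(n)} (n!/(γ_1!⋯γ_n!)) q^{∑_{i=1}^{n−1}(γ_1+⋯+γ_i−i)x_{i+1}} ∏_{i=1}^n [x_i]_q^{γ_i}`. -/
theorem stmt2 (n : ℕ) (hn : 1 ≤ n) (x : ℕ → ℕ) :
    ∑ᶠ α ∈ {α : Fin n → ℕ | IsVPF n x α}, (X : Polynomial ℤ) ^ rsumV n x α =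
      ∑ᶠ γ ∈ GammaSet n,
        ((Nat.factorial n / ∏ i : Fin n, Nat.factorial (γ i) : ℕ) : Polynomial ℤ) *
          X ^ gammaExp n x γ * ∏ i : Fin n, qNum (x (i : ℕ)) ^ γ i :=
  stmt2_general n x
end

section
/- Let n ≥ 1, a ≥ 1 and b ∈ ℕ, and let x = (a, b, b, …, b) ∈ ℕ^n. Then the number of x-parking functions equals a·(a + n·b)^{n−1}. -/
/-!
Pollak's circle argument. Put `m = a + n b` and read `β ∈ (ℤ/m)ⁿ` as `n` points on a circle of
length `m`. The sequence `i ↦ (β i - u).val` is an `x`-parking function iff for every `j < n` the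
arc `[u, u + a + j b)` carries at least `j + 1` of the points. If `cnt T` counts the points of the
periodically unrolled circle in `[0, T)`, this says that the walk `b * cnt T - T` stays above its
value at `u + m` throughout `[0, u + m)`, i.e. that `u + m` is a strict new minimum of the walk.
The walk goes down by at most one per step and loses exactly `a` per period, so every period
contains exactly `a` new minima: for each `β` exactly `a` of the `m` translates `β + c` give parking
functions, whence `m · #PF(x) = a · mⁿ`.
-/

instance (n : ℕ) (x : ℕ → ℕ) (α : Fin n → ℕ) : Decidable (IsVPF n x α) := by
  unfold IsVPF; infer_instance

open Finset

section NewMinima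

variable (Φ : ℕ → ℤ)

def IsNewMin (T : ℕ) : Prop := ∀ t < T, Φ T < Φ t

instance : DecidablePred (IsNewMin Φ) := fun T => by unfold IsNewMin; infer_instance

def runningMin (T : ℕ) : ℤ := (range (T + 1)).inf' nonempty_range_add_one Φ

lemma runningMin_le {t T : ℕ} (h : t ≤ T) : runningMin Φ T ≤ Φ t :=
  inf'_le Φ (mem_range_succ_iff.2 h)

lemma exists_runningMin_eq (T : ℕ) : ∃ t ≤ T, runningMin Φ T = Φ t := by
  obtain ⟨t, ht, h⟩ := exists_mem_eq_inf' nonempty_range_add_one Φ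
  exact ⟨t, mem_range_succ_iff.1 ht, h⟩

lemma isNewMin_succ_iff (T : ℕ) : IsNewMin Φ (T + 1) ↔ Φ (T + 1) < runningMin Φ T := by
  simp only [IsNewMin, runningMin, lt_inf'_iff, mem_range, Nat.lt_succ_iff]

lemma runningMin_succ (T : ℕ) : runningMin Φ (T + 1) = min (Φ (T + 1)) (runningMin Φ T) := by
  simp only [runningMin, range_add_one (n := T + 1), inf'_insert nonempty_range_add_one]

variable {Φ}

lemma runningMin_succ_of_skipFree (hstep : ∀ T, Φ T - 1 ≤ Φ (T + 1)) (T : ℕ) :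
    runningMin Φ (T + 1) = runningMin Φ T - if IsNewMin Φ (T + 1) then 1 else 0 := by
  have hT := runningMin_le Φ le_rfl (T := T)
  have := hstep T
  rw [runningMin_succ]
  split_ifs with h <;> rw [isNewMin_succ_iff] at h <;> omega

lemma card_isNewMin_Ioc (hstep : ∀ T, Φ T - 1 ≤ Φ (T + 1)) (T k : ℕ) :
    (#{t ∈ Ioc T (T + k) | IsNewMin Φ t} : ℤ) = runningMin Φ T - runningMin Φ (T + k) := by
  induction k with
  | zero => simp
  | succ k ih =>
    rw [← add_assoc, ← insert_Ioc_right_eq_Ioc_add_one (by omega), filter_insert,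
      runningMin_succ_of_skipFree hstep]
    split_ifs
    · rw [card_insert_of_notMem (by simp)]
      push_cast
      omega
    · omega

lemma runningMin_add_period {m a : ℕ} (hper : ∀ T, Φ (T + m) = Φ T - a) {T : ℕ} (hT : m ≤ T + 1) :
    runningMin Φ (T + m) = runningMin Φ T - a := by
  apply le_antisymm
  · obtain ⟨t, ht, hmin⟩ := exists_runningMin_eq Φ T
    rw [hmin, ← hper]
    exact runningMin_le Φ (by omega)
  · refine le_inf' _ _ fun s hs => ?_
    rw [mem_range] at hs
    rcases lt_or_ge s m with hsm | hsm
    · have := runningMin_le Φ (show s ≤ T by omega)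
      omega
    · have := runningMin_le Φ (show s - m ≤ T by omega)
      rw [← Nat.sub_add_cancel hsm, hper]
      omega

lemma card_isNewMin_Ioc_period {m a : ℕ} (hstep : ∀ T, Φ T - 1 ≤ Φ (T + 1))
    (hper : ∀ T, Φ (T + m) = Φ T - a) {T : ℕ} (hT : m ≤ T + 1) :
    #{t ∈ Ioc T (T + m) | IsNewMin Φ t} = a := by
  have := card_isNewMin_Ioc hstep T m
  rw [runningMin_add_period hper hT] at this
  omega

end NewMinima

section Cycle

variable {a b n : ℕ} {cnt : ℕ → ℕ}

def GoodStart (a b n : ℕ) (cnt : ℕ → ℕ) (u : ℕ) : Prop :=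
  ∀ j < n, cnt u + (j + 1) ≤ cnt (u + (a + j * b))

instance (a b n : ℕ) (cnt : ℕ → ℕ) : DecidablePred (GoodStart a b n cnt) := fun u => by
  unfold GoodStart; infer_instance

def parkingWalk (b : ℕ) (cnt : ℕ → ℕ) (T : ℕ) : ℤ := b * cnt T - T

lemma parkingWalk_skipFree (hmono : Monotone cnt) (T : ℕ) :
    parkingWalk b cnt T - 1 ≤ parkingWalk b cnt (T + 1) := by
  have : b * cnt T ≤ b * cnt (T + 1) := Nat.mul_le_mul_left b (hmono T.le_succ)
  simp only [parkingWalk]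
  push_cast
  omega

lemma parkingWalk_add_period (hper : ∀ T, cnt (T + (a + n * b)) = cnt T + n) (T : ℕ) :
    parkingWalk b cnt (T + (a + n * b)) = parkingWalk b cnt T - a := by
  simp only [parkingWalk, hper]
  push_cast
  ring

lemma goodStart_iff_forall_lt (ha : 1 ≤ a) (hmono : Monotone cnt)
    (hper : ∀ T, cnt (T + (a + n * b)) = cnt T + n) (u : ℕ) :
    GoodStart a b n cnt u ↔
      ∀ t, u < t → t < u + (a + n * b) → parkingWalk b cnt u - a < parkingWalk b cnt t := by
  rcases b.eq_zero_or_pos with rfl | hb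
  · have hper0 : cnt (u + a) = cnt u + n := by simpa using hper u
    simp only [GoodStart, parkingWalk, mul_zero, add_zero, hper0, Nat.cast_zero, zero_mul, zero_sub]
    constructor
    · intro _ t _ ht
      omega
    · intro _ j hj
      omega
  constructor
  · intro hgood t hut htm
    have hcnt : b * cnt u ≤ b * cnt t := Nat.mul_le_mul_left b (hmono hut.le)
    simp only [parkingWalk]
    rcases lt_or_ge t (u + a) with hta | hta
    · omega
    obtain ⟨j, r, hr, rfl⟩ : ∃ j r, r < b ∧ t = u + (a + j * b) + r :=
      ⟨(t - u - a) / b, (t - u - a) % b, Nat.mod_lt _ hb, by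
        have := Nat.div_add_mod' (t - u - a) b; omega⟩
    have hj : j < n := by
      by_contra! h
      have : n * b ≤ j * b := Nat.mul_le_mul_right b h
      omega
    have hstart : cnt u + (j + 1) ≤ cnt (u + (a + j * b) + r) :=
      (hgood j hj).trans (hmono (Nat.le_add_right _ _))
    have : (b : ℤ) * (cnt u + (j + 1)) ≤ b * cnt (u + (a + j * b) + r) := by
      exact_mod_cast Nat.mul_le_mul_left b hstart
    push_cast
    nlinarith
  · intro hwin j hj
    have hjb : j * b < n * b := Nat.mul_lt_mul_of_pos_right hj hb
    have h := hwin (u + (a + j * b)) (by omega) (by omega)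
    simp only [parkingWalk] at h
    push_cast at h
    have h' : (b : ℤ) * (cnt u + j) < b * cnt (u + (a + j * b)) := by linarith
    have := lt_of_mul_lt_mul_left h' (Int.natCast_nonneg b)
    omega

lemma forall_lt_iff_isNewMin (ha : 1 ≤ a) (hper : ∀ T, cnt (T + (a + n * b)) = cnt T + n)
    {u : ℕ} (hu : u < a + n * b) :
    (∀ t, u < t → t < u + (a + n * b) → parkingWalk b cnt u - a < parkingWalk b cnt t) ↔
      IsNewMin (parkingWalk b cnt) (u + (a + n * b)) := by
  have hperW := parkingWalk_add_period hper (b := b)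
  rw [IsNewMin, hperW]
  constructor
  · intro hwin t ht
    rcases lt_trichotomy t u with htu | rfl | htu
    · have := hwin (t + (a + n * b)) (by omega) (by omega)
      rw [hperW] at this
      omega
    · omega
    · exact hwin t htu ht
  · intro hmin t hut htm
    exact hmin t htm

lemma card_goodStart (ha : 1 ≤ a) (hmono : Monotone cnt)
    (hper : ∀ T, cnt (T + (a + n * b)) = cnt T + n) :
    #{u ∈ range (a + n * b) | GoodStart a b n cnt u} = a := by
  set m := a + n * b
  calc #{u ∈ range m | GoodStart a b n cnt u}
      = #{t ∈ Ioc (m - 1) (m - 1 + m) | IsNewMin (parkingWalk b cnt) t} := by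
        refine card_nbij' (· + m) (· - m) ?_ ?_ ?_ ?_
        · intro u hu
          simp only [coe_filter, mem_range, Set.mem_ofPred_eq, mem_Ioc] at hu ⊢
          rw [goodStart_iff_forall_lt ha hmono hper, forall_lt_iff_isNewMin ha hper hu.1] at hu
          exact ⟨by omega, hu.2⟩
        · intro t ht
          simp only [coe_filter, mem_range, Set.mem_ofPred_eq, mem_Ioc] at ht ⊢
          rw [goodStart_iff_forall_lt ha hmono hper, forall_lt_iff_isNewMin ha hper (by omega),
            Nat.sub_add_cancel (by omega)]
          exact ⟨by omega, ht.2⟩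
        · intro u _
          simp
        · intro t ht
          simp only [coe_filter, mem_Ioc, Set.mem_ofPred_eq] at ht
          exact Nat.sub_add_cancel (by omega)
    _ = a := card_isNewMin_Ioc_period (parkingWalk_skipFree hmono) (parkingWalk_add_period hper)
        (by omega)

end Cycle

section ResidueCount

variable {m n : ℕ}

def residueCount (β : Fin n → ZMod m) (T : ℕ) : ℕ :=
  ∑ i, Nat.count (fun k => (k : ZMod m) = β i) T

lemma residueCount_monotone (β : Fin n → ZMod m) : Monotone (residueCount β) :=
  fun _ _ h => sum_le_sum fun _ _ => Nat.count_monotone _ h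

variable [NeZero m]

lemma count_natCast_eq (w : ZMod m) {t : ℕ} (ht : t ≤ m) :
    Nat.count (fun k => (k : ZMod m) = w) t = if w.val < t then 1 else 0 := by
  have hfilter : {k ∈ range t | ((k : ℕ) : ZMod m) = w} = {k ∈ range t | k = w.val} := by
    refine filter_congr fun k hk => ?_
    rw [← (ZMod.val_injective m).eq_iff, ZMod.val_cast_of_lt (by simp at hk; omega)]
  rw [Nat.count_eq_card_filter_range, hfilter, filter_eq']
  split_ifs <;> simp_all

lemma count_natCast_eq_add (v : ZMod m) (u : ℕ) {t : ℕ} (ht : t ≤ m) :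
    Nat.count (fun k => (k : ZMod m) = v) (u + t) =
      Nat.count (fun k => (k : ZMod m) = v) u + if (v - (u : ZMod m)).val < t then 1 else 0 := by
  rw [Nat.count_add, ← count_natCast_eq (v - (u : ZMod m)) ht]
  congr 1
  simp only [Nat.cast_add, eq_sub_iff_add_eq, add_comm]

lemma residueCount_add (β : Fin n → ZMod m) (u : ℕ) {t : ℕ} (ht : t ≤ m) :
    residueCount β (u + t) = residueCount β u + #{i | (β i - u).val < t} := by
  simp only [residueCount, count_natCast_eq_add _ _ ht, sum_add_distrib, card_filter]

lemma residueCount_add_period (β : Fin n → ZMod m) (T : ℕ) :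
    residueCount β (T + m) = residueCount β T + n := by
  simp [residueCount_add β T le_rfl, ZMod.val_lt]

end ResidueCount

lemma card_mul_card_filter_eq_sum_card_filter_add {ι G : Type*} [Fintype ι] [DecidableEq ι]
    [AddGroup G] [Fintype G] (P : (ι → G) → Prop) [DecidablePred P] :
    Fintype.card G * #{γ | P γ} = ∑ β : ι → G, #{c | P (fun i => β i + c)} := by
  have htranslate (c : G) : #{β : ι → G | P (fun i => β i + c)} = #{γ | P γ} :=
    card_equiv (Equiv.addRight fun _ => c) fun β => by simp [Pi.add_def]
  calc Fintype.card G * #{γ | P γ} = ∑ c : G, #{β : ι → G | P (fun i => β i + c)} := by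
        simp [htranslate]
    _ = ∑ β : ι → G, #{c | P (fun i => β i + c)} := by
        simp only [card_filter]
        exact sum_comm

lemma sum_range_succ_ite_zero (a b j : ℕ) :
    ∑ k ∈ range (j + 1), (if k = 0 then a else b) = a + j * b := by
  simp [sum_range_succ', add_comm]

lemma IsVPF.lt_sum {n : ℕ} {x : ℕ → ℕ} {α : Fin n → ℕ} (h : IsVPF n x α) (i : Fin n) :
    α i < ∑ k ∈ range n, x k := by
  have hn := i.pos
  have hlast := h ⟨n - 1, by omega⟩
  simp only [Nat.sub_add_cancel (show 1 ≤ n by omega)] at hlast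
  have huniv : ({i | α i < ∑ k ∈ range n, x k} : Finset (Fin n)) = univ :=
    eq_univ_of_card _ (le_antisymm (card_le_univ _) (by rw [Fintype.card_fin]; exact hlast))
  simpa using huniv.ge (mem_univ i)

lemma ncard_setOf_isVPF {n m : ℕ} [NeZero m] {x : ℕ → ℕ} (hx : ∑ k ∈ range n, x k ≤ m) :
    {α | IsVPF n x α}.ncard = #{γ : Fin n → ZMod m | IsVPF n x (fun i => (γ i).val)} := by
  have himage : {α | IsVPF n x α} =
      (fun (γ : Fin n → ZMod m) i => (γ i).val) ''
        ({γ | IsVPF n x (fun i => (γ i).val)} : Finset (Fin n → ZMod m)) := by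
    ext α
    constructor
    · intro h
      have hval (i : Fin n) : (α i : ZMod m).val = α i :=
        ZMod.val_cast_of_lt ((h.lt_sum i).trans_le hx)
      refine ⟨fun i => (α i : ZMod m), ?_, funext hval⟩
      simpa [hval] using h
    · rintro ⟨γ, hγ, rfl⟩
      simpa using hγ
  rw [himage, Set.ncard_image_of_injective _ fun _ _ h => funext fun i =>
    ZMod.val_injective m (congrFun h i), Set.ncard_coe_finset]

section Bridge

variable {a b n m : ℕ} [NeZero m]

lemma isVPF_sub_iff_goodStart (hm : m = a + n * b) (β : Fin n → ZMod m) (u : ℕ) :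
    IsVPF n (fun k => if k = 0 then a else b) (fun i => (β i - u).val) ↔
      GoodStart a b n (residueCount β) u := by
  have hwindow {j : ℕ} (hj : j < n) : a + j * b ≤ m := by
    have := Nat.mul_le_mul_right b hj.le
    omega
  simp only [IsVPF, GoodStart, sum_range_succ_ite_zero, Fin.forall_iff]
  refine forall₂_congr fun j hj => ?_
  rw [residueCount_add β u (hwindow hj)]
  omega

lemma card_isVPF_add (ha : 1 ≤ a) (hm : m = a + n * b) (β : Fin n → ZMod m) :
    #{c | IsVPF n (fun k => if k = 0 then a else b) (fun i => (β i + c).val)} = a := by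
  have hper : ∀ T, residueCount β (T + (a + n * b)) = residueCount β T + n :=
    hm ▸ residueCount_add_period β
  calc _ = #{u ∈ range (a + n * b) | GoodStart a b n (residueCount β) u} := by
        refine card_nbij' (fun c => (-c).val) (fun u => -(u : ZMod m)) ?_ ?_ ?_ ?_
        · intro c hc
          simp only [coe_filter, mem_univ, true_and, Set.mem_ofPred_eq, mem_range] at hc ⊢
          rw [← isVPF_sub_iff_goodStart hm, ← hm]
          simpa [ZMod.val_lt] using hc
        · intro u hu
          simp only [coe_filter, mem_univ, true_and, Set.mem_ofPred_eq, mem_range] at hu ⊢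
          rw [← isVPF_sub_iff_goodStart hm] at hu
          simpa [sub_eq_add_neg] using hu.2
        · intro c _
          simp
        · intro u hu
          simp only [coe_filter, Set.mem_ofPred_eq, mem_range] at hu
          simp [ZMod.val_cast_of_lt (hm ▸ hu.1)]
    _ = a := card_goodStart ha (residueCount_monotone β) hper

lemma mul_card_isVPF_zmod (ha : 1 ≤ a) (hm : m = a + n * b) :
    m * #{γ : Fin n → ZMod m | IsVPF n (fun k => if k = 0 then a else b) (fun i => (γ i).val)} =
      a * m ^ n := by
  have := card_mul_card_filter_eq_sum_card_filter_add
    fun γ : Fin n → ZMod m => IsVPF n (fun k => if k = 0 then a else b) (fun i => (γ i).val)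
  simp only [ZMod.card, card_isVPF_add ha hm, sum_const, card_univ, Fintype.card_fun,
    Fintype.card_fin, smul_eq_mul] at this
  rw [this, mul_comm]

end Bridge

/-- The number of `(a,b,b,…,b)`-parking functions is `a(a+nb)^{n−1}`. -/
theorem stmt10 (n : ℕ) (hn : 1 ≤ n) (a b : ℕ) (ha : 1 ≤ a) :
    Set.ncard {α : Fin n → ℕ | IsVPF n (fun k => if k = 0 then a else b) α} =
      a * (a + n * b) ^ (n - 1) := by
  set m := a + n * b with hm
  have : NeZero m := ⟨by omega⟩
  have hsum : ∑ k ∈ range n, (if k = 0 then a else b) ≤ m := by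
    obtain ⟨j, rfl⟩ := Nat.exists_eq_add_of_le' hn
    rw [sum_range_succ_ite_zero]
    nlinarith
  apply Nat.eq_of_mul_eq_mul_left (show 0 < m by omega)
  rw [ncard_setOf_isVPF hsum, mul_card_isVPF_zmod ha hm, mul_left_comm,
    mul_pow_sub_one (by omega)]
end
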